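/- (Support number via factorization) Let A = U U† and B = V V† be positive semidefinite with ker B ⊆ ker A. Then the support number satisfies τ(A,B) = min{ ‖W‖²_{2→2} : V W = U }, where ‖·‖_{2→2} is the operator (spectral) norm; the minimum is attained at W = V^# U with V^# the Moore–Penrose pseudoinverse of V. In particular, for any W with V W = U, τ(A,B) ≤ ‖W‖²_{2→2}. -/

import Mathlib

open Matrix
open scoped ComplexOrder Matrix.Norms.L2Operator

set_option linter.unusedSectionVars false

namespace SuppNumAux

noncomputable def toE {m : Type*} (y : m → ℂ) : EuclideanSpace ℂ m :=
  (WithLp.equiv 2 (m → ℂ)).symm y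

lemma norm_mulVec_le {m l : Type*} [Fintype m] [Fintype l] [DecidableEq l]
    (W : Matrix m l ℂ) (x : l → ℂ) :
    ‖toE (W *ᵥ x)‖ ≤ ‖W‖ * ‖toE x‖ :=
  Matrix.l2_opNorm_mulVec W (toE x)

lemma dot_self_eq {m : Type*} [Fintype m] (y : m → ℂ) :
    dotProduct (star y) y = ((‖toE y‖ ^ 2 : ℝ) : ℂ) := by
  have h := EuclideanSpace.inner_toLp_toLp (𝕜 := ℂ) y y
  rw [show (WithLp.toLp 2 y : EuclideanSpace ℂ m) = toE y from rfl] at h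
  rw [dotProduct_comm, ← h, inner_self_eq_norm_sq_to_K]
  norm_cast

lemma toE_eq_zero {m : Type*} [Fintype m] (y : m → ℂ) (h : ‖toE y‖ = 0) : y = 0 := by
  have : toE y = 0 := norm_eq_zero.mp h
  exact (WithLp.toLp_eq_zero (p := 2)).mp this

lemma dot_mul_conjTranspose {m l : Type*} [Fintype m] [Fintype l]
    (M : Matrix m l ℂ) (v : m → ℂ) :
    dotProduct (star v) ((M * Mᴴ) *ᵥ v) = ((‖toE (Mᴴ *ᵥ v)‖ ^ 2 : ℝ) : ℂ) := by
  rw [← mulVec_mulVec, dotProduct_mulVec,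
    show star v ᵥ* M = star (Mᴴ *ᵥ v) from by rw [star_mulVec, conjTranspose_conjTranspose],
    dot_self_eq]

variable {n k p : Type*} [Fintype n] [Fintype k] [Fintype p]

lemma qf (r : ℝ) (U : Matrix n k ℂ) (V : Matrix n p ℂ) (v : n → ℂ) :
    dotProduct (star v) ((((r : ℂ) • (V * Vᴴ) - U * Uᴴ)) *ᵥ v)
      = ((r * ‖toE (Vᴴ *ᵥ v)‖ ^ 2 - ‖toE (Uᴴ *ᵥ v)‖ ^ 2 : ℝ) : ℂ) := by
  rw [sub_mulVec, dotProduct_sub, smul_mulVec, dotProduct_smul,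
    dot_mul_conjTranspose, dot_mul_conjTranspose, smul_eq_mul]
  push_cast
  ring

lemma posSemidef_iff (r : ℝ) (U : Matrix n k ℂ) (V : Matrix n p ℂ) :
    ((r : ℂ) • (V * Vᴴ) - U * Uᴴ).PosSemidef ↔
      ∀ v : n → ℂ, ‖toE (Uᴴ *ᵥ v)‖ ^ 2 ≤ r * ‖toE (Vᴴ *ᵥ v)‖ ^ 2 := by
  constructor
  · intro h v
    have h2 := h.dotProduct_mulVec_nonneg v
    rw [qf] at h2
    have h3 := Complex.zero_le_real.mp h2
    linarith
  · intro h
    refine Matrix.posSemidef_iff_dotProduct_mulVec.mpr ⟨?_, ?_⟩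
    · have h1 := (isHermitian_mul_conjTranspose_self V).eq
      have h2 := (isHermitian_mul_conjTranspose_self U).eq
      simp [Matrix.IsHermitian, conjTranspose_smul, h1, h2, Complex.star_def,
        Complex.conj_ofReal]
    · intro v
      rw [qf]
      exact Complex.zero_le_real.mpr (by linarith [h v])

lemma mem_S [DecidableEq k] [DecidableEq p] (U : Matrix n k ℂ) (V : Matrix n p ℂ) (W : Matrix p k ℂ)
    (hW : V * W = U) (r : ℝ) (hr : ‖W‖ ^ 2 ≤ r) :
    ((r : ℂ) • (V * Vᴴ) - U * Uᴴ).PosSemidef := by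
  rw [posSemidef_iff]
  intro v
  have e1 : Uᴴ *ᵥ v = Wᴴ *ᵥ (Vᴴ *ᵥ v) := by
    rw [mulVec_mulVec, ← conjTranspose_mul, hW]
  have e2 : ‖toE (Wᴴ *ᵥ (Vᴴ *ᵥ v))‖ ≤ ‖W‖ * ‖toE (Vᴴ *ᵥ v)‖ := by
    have := norm_mulVec_le Wᴴ (Vᴴ *ᵥ v)
    rwa [Matrix.l2_opNorm_conjTranspose] at this
  have h0 : (0:ℝ) ≤ ‖W‖ * ‖toE (Vᴴ *ᵥ v)‖ := by positivity
  rw [e1]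
  nlinarith [norm_nonneg (toE (Wᴴ *ᵥ (Vᴴ *ᵥ v))), norm_nonneg (toE (Vᴴ *ᵥ v)), sq_nonneg (‖toE (Vᴴ *ᵥ v)‖)]

lemma opNorm_le_of_sq {m l : Type*} [Fintype m] [Fintype l] [DecidableEq l]
    (W : Matrix m l ℂ) {t : ℝ} (ht : 0 ≤ t)
    (h : ∀ x : l → ℂ, ‖toE (W *ᵥ x)‖ ^ 2 ≤ t * ‖toE x‖ ^ 2) : ‖W‖ ^ 2 ≤ t := by
  have key : ∀ x : EuclideanSpace ℂ l,
      ‖(Matrix.toEuclideanLin (𝕜 := ℂ) (m := m) (n := l)).trans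
        LinearMap.toContinuousLinearMap W x‖ ≤ Real.sqrt t * ‖x‖ := by
    intro x
    have hx := h ((WithLp.equiv 2 (l → ℂ)) x)
    have e1 : toE ((WithLp.equiv 2 (l → ℂ)) x) = x := (WithLp.equiv 2 (l → ℂ)).symm_apply_apply x
    rw [e1] at hx
    have e2 : ((Matrix.toEuclideanLin (𝕜 := ℂ) (m := m) (n := l)).trans LinearMap.toContinuousLinearMap W) x
        = toE (W *ᵥ (WithLp.equiv 2 (l → ℂ)) x) := rfl
    rw [e2]
    nlinarith [norm_nonneg (toE (W *ᵥ (WithLp.equiv 2 (l → ℂ)) x)), Real.sqrt_nonneg t,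
      norm_nonneg x, mul_nonneg (Real.sqrt_nonneg t) (norm_nonneg x), Real.sq_sqrt ht]
  have h1 : ‖W‖ ≤ Real.sqrt t := by
    rw [Matrix.l2_opNorm_def]
    exact ContinuousLinearMap.opNorm_le_bound _ (Real.sqrt_nonneg t) key
  calc ‖W‖ ^ 2 ≤ Real.sqrt t ^ 2 := by
        have := norm_nonneg W
        nlinarith
    _ = t := Real.sq_sqrt ht

lemma norm_proj_le {q : Type*} [Fintype q] [DecidableEq q] (P : Matrix q q ℂ)
    (hP : Pᴴ = P) (hP2 : P * P = P) : ‖P‖ ≤ 1 := by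
  have h := Matrix.l2_opNorm_conjTranspose_mul_self P
  rw [hP, hP2] at h
  nlinarith [norm_nonneg P]


lemma eq_of_mulVec_eq {a b : Type*} [Fintype b] [DecidableEq b] {M N : Matrix a b ℂ}
    (h : ∀ x : b → ℂ, M *ᵥ x = N *ᵥ x) : M = N := by
  ext i j
  have := congrFun (h (Pi.single j 1)) i
  simpa [mulVec_single] using this

lemma bound [DecidableEq k] [DecidableEq p] {t : ℝ} (ht : 0 ≤ t)
    (U : Matrix n k ℂ) (V : Matrix n p ℂ) (Vp : Matrix p n ℂ)
    (h1 : V * Vp * V = V) (h4 : (Vp * V)ᴴ = Vp * V)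
    (hpsd : ((t : ℂ) • (V * Vᴴ) - U * Uᴴ).PosSemidef) : ‖Vp * U‖ ^ 2 ≤ t := by
  have hP2 : (Vp * V) * (Vp * V) = Vp * V := by
    calc (Vp * V) * (Vp * V) = Vp * (V * Vp * V) := by
          simp only [Matrix.mul_assoc]
      _ = Vp * V := by rw [h1]
  have hPnorm : ‖Vp * V‖ ≤ 1 := norm_proj_le _ h4 hP2
  rw [← Matrix.l2_opNorm_conjTranspose (Vp * U)]
  apply opNorm_le_of_sq _ ht
  intro z
  have key := (posSemidef_iff t U V).mp hpsd (Vpᴴ *ᵥ z)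
  have e1 : Uᴴ *ᵥ (Vpᴴ *ᵥ z) = (Vp * U)ᴴ *ᵥ z := by
    rw [mulVec_mulVec, ← conjTranspose_mul]
  have e2 : Vᴴ *ᵥ (Vpᴴ *ᵥ z) = (Vp * V) *ᵥ z := by
    rw [mulVec_mulVec, ← conjTranspose_mul, h4]
  rw [e1, e2] at key
  have h5 : ‖toE ((Vp * V) *ᵥ z)‖ ≤ ‖toE z‖ := by
    have := norm_mulVec_le (Vp * V) z
    nlinarith [norm_nonneg (toE z)]
  calc ‖toE ((Vp * U)ᴴ *ᵥ z)‖ ^ 2 ≤ t * ‖toE ((Vp * V) *ᵥ z)‖ ^ 2 := key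
    _ ≤ t * ‖toE z‖ ^ 2 := by nlinarith [norm_nonneg (toE ((Vp * V) *ᵥ z)), ht,
          mul_self_le_mul_self (norm_nonneg (toE ((Vp * V) *ᵥ z))) h5]

lemma ker_lemma (A : Matrix n n ℂ) (U : Matrix n k ℂ) (hU : A = U * Uᴴ)
    (w : n → ℂ) (hw : A *ᵥ w = 0) : Uᴴ *ᵥ w = 0 := by
  have h0 : dotProduct (star w) (A *ᵥ w) = 0 := by rw [hw, dotProduct_zero]
  rw [hU, dot_mul_conjTranspose] at h0
  have h2 : ‖toE (Uᴴ *ᵥ w)‖ ^ 2 = 0 := by exact_mod_cast h0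
  exact toE_eq_zero _ (by nlinarith [norm_nonneg (toE (Uᴴ *ᵥ w))])

lemma vvpu [DecidableEq n] (U : Matrix n k ℂ) (V : Matrix n p ℂ) (Vp : Matrix p n ℂ)
    (h1 : V * Vp * V = V) (h3 : (V * Vp)ᴴ = V * Vp)
    (hker' : ∀ w : n → ℂ, Vᴴ *ᵥ w = 0 → Uᴴ *ᵥ w = 0) : V * (Vp * U) = U := by
  have hVVp : Vᴴ * (V * Vp) = Vᴴ := by
    have := congrArg conjTranspose h1
    rwa [conjTranspose_mul (V * Vp) V, h3] at this
  have key : Uᴴ * (V * Vp) = Uᴴ := by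
    apply eq_of_mulVec_eq
    intro x
    rw [← mulVec_mulVec]
    have hVx : Vᴴ *ᵥ ((V * Vp) *ᵥ x - x) = 0 := by
      rw [mulVec_sub, mulVec_mulVec, hVVp, sub_self]
    have hUx := hker' _ hVx
    rwa [mulVec_sub, sub_eq_zero] at hUx
  have := congrArg conjTranspose key
  rwa [conjTranspose_mul, h3, conjTranspose_conjTranspose, Matrix.mul_assoc] at this


lemma exists_pinv [DecidableEq p] (V : Matrix n p ℂ) :
    ∃ Vp : Matrix p n ℂ, V * Vp * V = V ∧ Vp * V * Vp = Vp ∧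
      (V * Vp)ᴴ = V * Vp ∧ (Vp * V)ᴴ = Vp * V := by
  have hC : (Vᴴ * V).IsHermitian := isHermitian_conjTranspose_mul_self V
  set C : Matrix p p ℂ := Vᴴ * V with hCdef
  set u : Matrix p p ℂ := (Matrix.IsHermitian.eigenvectorUnitary hC : Matrix p p ℂ) with hu
  have huu : star u * u = 1 := Matrix.UnitaryGroup.star_mul_self _
  have huu' : u * star u = 1 :=
    Matrix.mem_unitaryGroup_iff.mp (Matrix.IsHermitian.eigenvectorUnitary hC).2
  set d : p → ℂ := RCLike.ofReal ∘ hC.eigenvalues with hd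
  have hdstar : ∀ i, star (d i) = d i := fun i => Complex.conj_ofReal _
  set dinv : p → ℂ := fun i => (d i)⁻¹ with hdinv
  have hspec : C = u * diagonal d * star u := hC.spectral_theorem
  set Cp : Matrix p p ℂ := u * diagonal dinv * star u with hCp
  have mul_diag : ∀ f g : p → ℂ,
      (u * diagonal f * star u) * (u * diagonal g * star u)
        = u * diagonal (fun i => f i * g i) * star u := by
    intro f g
    calc (u * diagonal f * star u) * (u * diagonal g * star u)
        = u * (diagonal f * ((star u * u) * diagonal g)) * star u := by
          simp only [Matrix.mul_assoc]
      _ = u * diagonal (fun i => f i * g i) * star u := by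
          rw [huu, Matrix.one_mul, diagonal_mul_diagonal]
  have herm_diag : ∀ f : p → ℂ, (∀ i, star (f i) = f i) →
      (u * diagonal f * star u)ᴴ = u * diagonal f * star u := by
    intro f hf
    rw [conjTranspose_mul, conjTranspose_mul, diagonal_conjTranspose,
      star_eq_conjTranspose, conjTranspose_conjTranspose]
    have hsf : star f = f := funext hf
    rw [show Matrix.diagonal (star f) = diagonal f from by rw [hsf]]
    simp only [Matrix.mul_assoc, star_eq_conjTranspose]
  have hCCp : C * Cp = u * diagonal (fun i => d i * dinv i) * star u := by
    rw [hspec, hCp, mul_diag]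
  have hCpC : Cp * C = u * diagonal (fun i => dinv i * d i) * star u := by
    rw [hspec, hCp, mul_diag]
  have hcomm : (fun i => d i * dinv i) = (fun i => dinv i * d i) := by
    funext i; ring
  have hfix : (fun i => (d i * dinv i) * d i) = d := by
    funext i
    rcases eq_or_ne (d i) 0 with h | h
    · simp [hdinv, h]
    · simp [hdinv, h]
  have hfix' : (fun i => (dinv i * d i) * dinv i) = dinv := by
    funext i
    rcases eq_or_ne (d i) 0 with h | h
    · simp [hdinv, h]
    · simp [hdinv, h]
  have hCCpC : C * Cp * C = C := by
    rw [hCCp, hspec, mul_diag, hfix, ← hspec]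
  have hCpCCp : Cp * C * Cp = Cp := by
    rw [hCpC, hCp, mul_diag, hfix']
  have hCph : Cpᴴ = Cp := by
    apply herm_diag
    intro i
    simp only [hdinv, star_inv₀]
    rw [hdstar]
  have hkerC : ∀ y : p → ℂ, C *ᵥ y = 0 → V *ᵥ y = 0 := by
    intro y hy
    have h0 : dotProduct (star y) (C *ᵥ y) = 0 := by rw [hy, dotProduct_zero]
    rw [hCdef, show Vᴴ * V = Vᴴ * (Vᴴ)ᴴ from by rw [conjTranspose_conjTranspose],
      dot_mul_conjTranspose] at h0
    have h2 : ‖toE ((Vᴴ)ᴴ *ᵥ y)‖ ^ 2 = 0 := by exact_mod_cast h0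
    have h3 := toE_eq_zero _ (by nlinarith [norm_nonneg (toE ((Vᴴ)ᴴ *ᵥ y))])
    rwa [conjTranspose_conjTranspose] at h3
  have hVCpC : V * (Cp * C) = V := by
    apply eq_of_mulVec_eq
    intro x
    have hCy : C *ᵥ ((Cp * C) *ᵥ x - x) = 0 := by
      rw [mulVec_sub, mulVec_mulVec, show C * (Cp * C) = C from by
        rw [← Matrix.mul_assoc, hCCpC], sub_self]
    have h6 := hkerC _ hCy
    rw [mulVec_sub, sub_eq_zero] at h6
    rw [← mulVec_mulVec, h6]
  refine ⟨Cp * Vᴴ, ?_, ?_, ?_, ?_⟩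
  · calc V * (Cp * Vᴴ) * V = V * (Cp * C) := by
          rw [hCdef]; simp only [Matrix.mul_assoc]
      _ = V := hVCpC
  · calc Cp * Vᴴ * V * (Cp * Vᴴ) = (Cp * C * Cp) * Vᴴ := by
          rw [hCdef]; simp only [Matrix.mul_assoc]
      _ = Cp * Vᴴ := by rw [hCpCCp]
  · calc (V * (Cp * Vᴴ))ᴴ = V * (Cpᴴ * Vᴴ) := by
          rw [conjTranspose_mul, conjTranspose_mul, conjTranspose_conjTranspose]
          simp only [Matrix.mul_assoc]
      _ = V * (Cp * Vᴴ) := by rw [hCph]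
  · have hPV : Cp * Vᴴ * V = Cp * C := by rw [hCdef, Matrix.mul_assoc]
    rw [hPV, conjTranspose_mul, hCph, hC.eq, hCCp, hCpC, hcomm]

end SuppNumAux


open Matrix
open scoped ComplexOrder

/-- The support number `τ(A,B) = min { t | r B − A ⪰ 0 for all r ≥ t }`. -/
noncomputable def suppNum {n : Type*} [Fintype n] (A B : Matrix n n ℂ) : ℝ :=
  sInf {t : ℝ | ∀ r : ℝ, t ≤ r → ((r : ℂ) • B - A).PosSemidef}

/-- The `2→2` (spectral) operator norm of a matrix. -/
noncomputable def opNorm {m n : Type*} [Fintype m] [Fintype n] [DecidableEq n]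
    (W : Matrix m n ℂ) : ℝ :=
  ‖(Matrix.toEuclideanLin W).toContinuousLinearMap‖

/-- Support number via factorization: if `A = U U†`, `B = V V†` and `ker B ⊆ ker A`,
then `τ(A,B) = min { ‖W‖²_{2→2} | V W = U }`; for any `W` with `V W = U` one has
`τ(A,B) ≤ ‖W‖²`, and the minimum is attained at `W = V^# U` with `V^#` the
Moore–Penrose pseudoinverse of `V`. -/
theorem suppNum_factorization
    {n k p : Type*} [Fintype n] [Fintype k] [Fintype p] [DecidableEq k] [DecidableEq p]
    (A B : Matrix n n ℂ) (U : Matrix n k ℂ) (V : Matrix n p ℂ)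
    (hU : A = U * Uᴴ) (hV : B = V * Vᴴ)
    (hker : ∀ v : n → ℂ, B.mulVec v = 0 → A.mulVec v = 0) :
    suppNum A B = sInf {r : ℝ | ∃ W : Matrix p k ℂ, V * W = U ∧ r = opNorm W ^ 2} ∧
    (∀ W : Matrix p k ℂ, V * W = U → suppNum A B ≤ opNorm W ^ 2) ∧
    (∀ Vp : Matrix p n ℂ,
      V * Vp * V = V → Vp * V * Vp = Vp → (V * Vp)ᴴ = V * Vp → (Vp * V)ᴴ = Vp * V →
      V * (Vp * U) = U ∧ opNorm (Vp * U) ^ 2 = suppNum A B) := by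
  classical
  have hker' : ∀ w : n → ℂ, Vᴴ *ᵥ w = 0 → Uᴴ *ᵥ w = 0 := by
    intro w hw
    refine SuppNumAux.ker_lemma A U hU w (hker w ?_)
    rw [hV, ← mulVec_mulVec, hw, mulVec_zero]
  have hopEq : ∀ W : Matrix p k ℂ, opNorm W = ‖W‖ := fun _ => rfl
  set S : Set ℝ := {t : ℝ | ∀ r : ℝ, t ≤ r → ((r : ℂ) • B - A).PosSemidef} with hSdef
  have hsupp : suppNum A B = sInf S := by rw [suppNum, ← hSdef]
  have part2 : ∀ W : Matrix p k ℂ, V * W = U → suppNum A B ≤ opNorm W ^ 2 := by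
    intro W hW
    have hmem : opNorm W ^ 2 ∈ S := by
      intro r hr
      rw [hU, hV]
      refine SuppNumAux.mem_S U V W hW r ?_
      rw [← hopEq W]
      exact hr
    by_cases hb : BddBelow S
    · rw [hsupp]
      exact csInf_le hb hmem
    · rw [hsupp, Real.sInf_of_not_bddBelow hb, hopEq W]
      positivity
  have part3 : ∀ Vp : Matrix p n ℂ,
      V * Vp * V = V → Vp * V * Vp = Vp → (V * Vp)ᴴ = V * Vp → (Vp * V)ᴴ = Vp * V →
      V * (Vp * U) = U ∧ opNorm (Vp * U) ^ 2 = suppNum A B := by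
    intro Vp h1 h2 h3 h4
    have hVU : V * (Vp * U) = U := SuppNumAux.vvpu U V Vp h1 h3 hker'
    refine ⟨hVU, ?_⟩
    have hub : suppNum A B ≤ opNorm (Vp * U) ^ 2 := part2 _ hVU
    have hmemS : opNorm (Vp * U) ^ 2 ∈ S := by
      intro r hr
      rw [hU, hV]
      refine SuppNumAux.mem_S U V _ hVU r ?_
      rw [← hopEq (Vp * U)]
      exact hr
    by_cases hneg : ∃ t ∈ S, t < 0
    · obtain ⟨t, htS, ht0⟩ := hneg
      have hzero : ∀ v : n → ℂ, ‖SuppNumAux.toE (Vᴴ *ᵥ v)‖ ^ 2 = 0 ∧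
          ‖SuppNumAux.toE (Uᴴ *ᵥ v)‖ ^ 2 = 0 := by
        intro v
        have hpsd := htS t le_rfl
        rw [hU, hV, SuppNumAux.posSemidef_iff] at hpsd
        have h1v := hpsd v
        have hV0 : ‖SuppNumAux.toE (Vᴴ *ᵥ v)‖ ^ 2 = 0 := by
          refine le_antisymm ?_ (by positivity)
          nlinarith [sq_nonneg ‖SuppNumAux.toE (Uᴴ *ᵥ v)‖]
        have hU0 : ‖SuppNumAux.toE (Uᴴ *ᵥ v)‖ ^ 2 = 0 := by
          refine le_antisymm ?_ (by positivity)
          nlinarith [hV0]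
        exact ⟨hV0, hU0⟩
      have hSall : ∀ s : ℝ, s ∈ S := by
        intro s r hr
        rw [hU, hV, SuppNumAux.posSemidef_iff]
        intro v
        rw [(hzero v).1, (hzero v).2]
        simp
      have hnb : ¬ BddBelow S := by
        rintro ⟨b, hb⟩
        have := hb (hSall (b - 1))
        linarith
      have h0 : ‖Vp * U‖ ^ 2 ≤ 0 := by
        have hpsd0 := hSall 0 0 le_rfl
        rw [hU, hV] at hpsd0
        exact SuppNumAux.bound le_rfl U V Vp h1 h4 hpsd0
      rw [hsupp, Real.sInf_of_not_bddBelow hnb, hopEq (Vp * U)]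
      exact le_antisymm h0 (by positivity)
    · push_neg at hneg
      have hlow : ∀ t ∈ S, opNorm (Vp * U) ^ 2 ≤ t := by
        intro t htS
        have hpsd := htS t le_rfl
        rw [hU, hV] at hpsd
        rw [hopEq (Vp * U)]
        exact SuppNumAux.bound (hneg t htS) U V Vp h1 h4 hpsd
      have hle : opNorm (Vp * U) ^ 2 ≤ suppNum A B := by
        rw [hsupp]
        exact le_csInf ⟨_, hmemS⟩ hlow
      exact le_antisymm hle hub
  obtain ⟨Vp, h1, h2, h3, h4⟩ := SuppNumAux.exists_pinv V
  obtain ⟨hVU, hval⟩ := part3 Vp h1 h2 h3 h4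
  refine ⟨?_, part2, part3⟩
  have hmemT : opNorm (Vp * U) ^ 2 ∈
      {r : ℝ | ∃ W : Matrix p k ℂ, V * W = U ∧ r = opNorm W ^ 2} := ⟨Vp * U, hVU, rfl⟩
  apply le_antisymm
  · refine le_csInf ⟨_, hmemT⟩ ?_
    rintro r ⟨W, hW, rfl⟩
    exact part2 W hW
  · refine csInf_le ⟨suppNum A B, ?_⟩ ?_
    · rintro r ⟨W, hW, rfl⟩
      exact part2 W hW
    · rw [← hval]
      exact hmemT
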